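/- Let (M,J) = ℂ³/∼ where (z₁,z₂,z₃) ∼ (z₁+a, z₂+c, z₃ + ā z₂ + b) for a,b,c ∈ ℤ[i], with global (1,0)-frame ω₁ = dz₁, ω₂ = dz₂, ω₃ = dz₃ − z̄₁dz₂ satisfying dω₃ = ω₂ ∧ ω̄₁. For any smooth function u on M pulled back from the base torus, the Hermitian form ω_u = e^u (i/2)(ω₁∧ω̄₁ + ω₂∧ω̄₂) + (i/2)ω₃∧ω̄₃ has vanishing torsion bivector field: σ_{ω_u} = 0. -/

import Mathlib

/-!
STATEMENT 14: On `(M,J) = ℂ³/∼` with `(z₁,z₂,z₃) ∼ (z₁+a, z₂+c, z₃+āz₂+b)`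
(a,b,c ∈ ℤ[i]), with frame `ω₁ = dz₁`, `ω₂ = dz₂`, `ω₃ = dz₃ − z̄₁dz₂`, for any
smooth function `u` pulled back from the base torus `T⁴` (i.e. independent of
`z₃`), the Hermitian form `ω_u = e^u (i/2)(ω₁∧ω̄₁+ω₂∧ω̄₂) + (i/2)ω₃∧ω̄₃` has
vanishing torsion bivector field
`(σ_ω)_{ī j̄} = i Σ_k g⁻¹dz̄_k( ∂ω_u(g⁻¹dz̄_i, g⁻¹dz̄_j, ∂̄_k) )`, computed on
the universal cover `ℂ³` with
`g_u⁻¹dz̄₁ = 2e^{−u}∂₁`, `g_u⁻¹dz̄₂ = 2(e^{−u}∂₂ + e^{−u}z̄₁∂₃)`,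
`g_u⁻¹dz̄₃ = 2(z₁e^{−u}∂₂ + (1+e^{−u}|z₁|²)∂₃)` and
`∂ω_u = e^u ∂u ∧ (i/2)(dz₁∧dz̄₁+dz₂∧dz̄₂) + (i/2)(dz₃ − z̄₁dz₂)∧dz₁∧dz̄₂`.
-/

open Complex

abbrev C3 := ℂ × ℂ × ℂ

noncomputable def pd1 (f : C3 → ℂ) (z : C3) : ℂ :=
  (1 / 2) * (fderiv ℝ f z (1, 0, 0) - Complex.I * fderiv ℝ f z (Complex.I, 0, 0))

noncomputable def pd2 (f : C3 → ℂ) (z : C3) : ℂ :=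
  (1 / 2) * (fderiv ℝ f z (0, 1, 0) - Complex.I * fderiv ℝ f z (0, Complex.I, 0))

noncomputable def pd3 (f : C3 → ℂ) (z : C3) : ℂ :=
  (1 / 2) * (fderiv ℝ f z (0, 0, 1) - Complex.I * fderiv ℝ f z (0, 0, Complex.I))

/-- `e^{−u}` as a complex-valued function. -/
noncomputable def eum (u : C3 → ℝ) (z : C3) : ℂ := (Real.exp (-u z) : ℂ)

/-- The vector fields `g_u⁻¹dz̄_k` acting as derivations on functions. -/
noncomputable def VactU (u : C3 → ℝ) : Fin 3 → (C3 → ℂ) → C3 → ℂ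
  | 0 => fun f z => 2 * eum u z * pd1 f z
  | 1 => fun f z => 2 * eum u z * (pd2 f z + (starRingEnd ℂ) z.1 * pd3 f z)
  | 2 => fun f z => 2 * (z.1 * eum u z * pd2 f z
      + (1 + eum u z * (Complex.normSq z.1 : ℂ)) * pd3 f z)

/-- `dz₁` evaluated on `g_u⁻¹dz̄_i`. -/
noncomputable def dz1V (u : C3 → ℝ) : Fin 3 → C3 → ℂ :=
  ![fun z => 2 * eum u z, fun _ => 0, fun _ => 0]

/-- `dz₂` evaluated on `g_u⁻¹dz̄_i`. -/
noncomputable def dz2V (u : C3 → ℝ) : Fin 3 → C3 → ℂ :=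
  ![fun _ => 0, fun z => 2 * eum u z, fun z => 2 * z.1 * eum u z]

/-- `dz₃` evaluated on `g_u⁻¹dz̄_i`. -/
noncomputable def dz3V (u : C3 → ℝ) : Fin 3 → C3 → ℂ :=
  ![fun _ => 0, fun z => 2 * eum u z * (starRingEnd ℂ) z.1,
    fun z => 2 * (1 + eum u z * (Complex.normSq z.1 : ℂ))]

/-- `ω₃ = dz₃ − z̄₁ dz₂` evaluated on `g_u⁻¹dz̄_i`. -/
noncomputable def w3V (u : C3 → ℝ) (i : Fin 3) (z : C3) : ℂ :=
  dz3V u i z - (starRingEnd ℂ) z.1 * dz2V u i z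

/-- `∂u` evaluated on `g_u⁻¹dz̄_i` (the holomorphic-derivative action). -/
noncomputable def delU (u : C3 → ℝ) (i : Fin 3) (z : C3) : ℂ :=
  VactU u i (fun w => (u w : ℂ)) z

/-- `∂ω_u(g_u⁻¹dz̄_i, g_u⁻¹dz̄_j, ∂̄_k)` with
`∂ω_u = e^u ∂u ∧ (i/2)(dz₁∧dz̄₁+dz₂∧dz̄₂) + (i/2)(dz₃ − z̄₁dz₂)∧dz₁∧dz̄₂`. -/
noncomputable def delOmegaU (u : C3 → ℝ) (i j k : Fin 3) (z : C3) : ℂ :=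
  (Complex.I / 2) * (Real.exp (u z) : ℂ) *
      ((delU u i z * dz1V u j z - delU u j z * dz1V u i z) * (if k = 0 then 1 else 0)
        + (delU u i z * dz2V u j z - delU u j z * dz2V u i z) * (if k = 1 then 1 else 0))
    + (Complex.I / 2) *
      ((w3V u i z * dz1V u j z - w3V u j z * dz1V u i z) * (if k = 1 then 1 else 0))

/-- Torsion bivector components
`(σ_{ω_u})_{ī j̄} = i Σ_k g_u⁻¹dz̄_k( ∂ω_u(g_u⁻¹dz̄_i, g_u⁻¹dz̄_j, ∂̄_k) )`. -/
noncomputable def sigmaU (u : C3 → ℝ) (i j : Fin 3) (z : C3) : ℂ :=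
  Complex.I * ∑ k : Fin 3, VactU u k (delOmegaU u i j k) z

/- ====== auxiliary infrastructure ====== -/

def ee1 : C3 := (1, 0, 0)
def ff1 : C3 := (Complex.I, 0, 0)
def ee2 : C3 := (0, 1, 0)
def ff2 : C3 := (0, Complex.I, 0)
def ee3 : C3 := (0, 0, 1)
def ff3 : C3 := (0, 0, Complex.I)

noncomputable def pdd (v w : C3) (f : C3 → ℂ) (z : C3) : ℂ :=
  (1 / 2) * (fderiv ℝ f z v - Complex.I * fderiv ℝ f z w)

lemma pd1_pdd (f : C3 → ℂ) (z : C3) : pd1 f z = pdd ee1 ff1 f z := rfl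
lemma pd2_pdd (f : C3 → ℂ) (z : C3) : pd2 f z = pdd ee2 ff2 f z := rfl
lemma pd3_pdd (f : C3 → ℂ) (z : C3) : pd3 f z = pdd ee3 ff3 f z := rfl

noncomputable def Uc (u : C3 → ℝ) : C3 → ℂ := fun z => (u z : ℂ)

noncomputable def pddF (v w : C3) : (C3 →L[ℝ] ℂ) →L[ℝ] ℂ :=
  ((1:ℂ)/2) • ((ContinuousLinearMap.apply ℝ ℂ v) - Complex.I • (ContinuousLinearMap.apply ℝ ℂ w))

lemma pddF_apply (v w : C3) (g : C3 →L[ℝ] ℂ) :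
    pddF v w g = (1/2) * (g v - Complex.I * g w) := by
  simp [pddF]

lemma pdd_eq_pddF (v w : C3) (f : C3 → ℂ) (z : C3) :
    pdd v w f z = pddF v w (fderiv ℝ f z) := (pddF_apply v w _).symm

/- basic rules -/
lemma pdd_const (v w : C3) (c : ℂ) (z : C3) : pdd v w (fun _ => c) z = 0 := by
  simp [pdd]

lemma pdd_zero_fun (v w : C3) (z : C3) : pdd v w (fun _ => (0:ℂ)) z = 0 := pdd_const v w 0 z

lemma pdd_neg (v w : C3) (f : C3 → ℂ) (z : C3) :
    pdd v w (fun x => -f x) z = -pdd v w f z := by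
  simp only [pdd, fderiv_neg]; simp; ring

lemma pdd_const_mul (v w : C3) (c : ℂ) (f : C3 → ℂ) (z : C3)
    (hf : DifferentiableAt ℝ f z) :
    pdd v w (fun x => c * f x) z = c * pdd v w f z := by
  simp only [pdd, fderiv_const_mul hf]; simp; ring

lemma pdd_mul (v w : C3) (f g : C3 → ℂ) (z : C3)
    (hf : DifferentiableAt ℝ f z) (hg : DifferentiableAt ℝ g z) :
    pdd v w (fun x => f x * g x) z = pdd v w f z * g z + f z * pdd v w g z := by
  simp only [pdd, fderiv_fun_mul hf hg]; simp; ring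

lemma pdd_sub (v w : C3) (f g : C3 → ℂ) (z : C3)
    (hf : DifferentiableAt ℝ f z) (hg : DifferentiableAt ℝ g z) :
    pdd v w (fun x => f x - g x) z = pdd v w f z - pdd v w g z := by
  simp only [pdd, fderiv_fun_sub hf hg]; simp; ring

lemma pdd_fst (v w : C3) (z : C3) :
    pdd v w (fun x : C3 => x.1) z = (1/2) * (v.1 - Complex.I * w.1) := by
  have h : fderiv ℝ (fun x : C3 => x.1) z = ContinuousLinearMap.fst ℝ ℂ (ℂ × ℂ) :=
    (ContinuousLinearMap.fst ℝ ℂ (ℂ × ℂ)).fderiv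
  simp [pdd, h]

/- the projection killing z₃ -/
noncomputable def Lm : C3 →L[ℝ] C3 :=
  (ContinuousLinearMap.fst ℝ ℂ (ℂ × ℂ)).prod
    (((ContinuousLinearMap.fst ℝ ℂ ℂ).comp (ContinuousLinearMap.snd ℝ ℂ (ℂ × ℂ))).prod 0)

lemma fderiv_invariant (f : C3 → ℂ) (hf : Differentiable ℝ f)
    (hinv : ∀ x, f (Lm x) = f x) (z v : C3) :
    fderiv ℝ f z v = fderiv ℝ f (Lm z) (Lm v) := by
  have hcomp : f = f ∘ Lm := funext fun x => (hinv x).symm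
  conv_lhs => rw [hcomp]
  rw [fderiv_comp z (hf (Lm z)) Lm.differentiableAt, Lm.fderiv]
  rfl

lemma pdd3_invariant (f : C3 → ℂ) (hf : Differentiable ℝ f)
    (hinv : ∀ x, f (Lm x) = f x) (z : C3) :
    pdd ee3 ff3 f z = 0 := by
  have h1 : Lm ee3 = 0 := rfl
  have h2 : Lm ff3 = 0 := rfl
  rw [pdd, fderiv_invariant f hf hinv z ee3, fderiv_invariant f hf hinv z ff3, h1, h2]
  simp

lemma pdd_invariant (f : C3 → ℂ) (hf : Differentiable ℝ f)
    (hinv : ∀ x, f (Lm x) = f x) (v w : C3) (hv : Lm v = v) (hw : Lm w = w) (z : C3) :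
    pdd v w f (Lm z) = pdd v w f z := by
  rw [pdd, pdd, fderiv_invariant f hf hinv z v, fderiv_invariant f hf hinv z w, hv, hw]

/- smoothness of the basic blocks -/
lemma contDiff_Uc (u : C3 → ℝ) (hu : ContDiff ℝ 2 u) : ContDiff ℝ 2 (Uc u) :=
  Complex.ofRealCLM.contDiff.comp hu

lemma eum_eq_exp (u : C3 → ℝ) : eum u = fun z => Complex.exp (-(Uc u z)) := by
  funext z
  rw [eum, Uc, Complex.ofReal_exp, Complex.ofReal_neg]

lemma contDiff_eum (u : C3 → ℝ) (hu : ContDiff ℝ 2 u) : ContDiff ℝ 2 (eum u) := by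
  rw [eum_eq_exp]
  exact ((Complex.contDiff_exp (𝕜 := ℂ) (n := 2)).restrict_scalars ℝ).comp (contDiff_Uc u hu).neg

lemma hasFDerivAt_eum (u : C3 → ℝ) (hu : ContDiff ℝ 2 u) (z : C3) :
    HasFDerivAt (eum u) (-(eum u z) • fderiv ℝ (Uc u) z) z := by
  have hUd : DifferentiableAt ℝ (Uc u) z :=
    ((contDiff_Uc u hu).differentiable two_ne_zero) z
  have h1 : HasFDerivAt (fun x => -(Uc u x)) (-(fderiv ℝ (Uc u) z)) z :=
    hUd.hasFDerivAt.neg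
  have h2 : HasFDerivAt Complex.exp
      ((ContinuousLinearMap.smulRight (1 : ℂ →L[ℂ] ℂ) (Complex.exp (-(Uc u z)))).restrictScalars ℝ)
      (-(Uc u z)) :=
    (Complex.hasDerivAt_exp _).hasFDerivAt.restrictScalars ℝ
  have h3 := h2.comp z h1
  have h4 : HasFDerivAt (eum u)
      (((ContinuousLinearMap.smulRight (1 : ℂ →L[ℂ] ℂ)
        (Complex.exp (-(Uc u z)))).restrictScalars ℝ).comp (-fderiv ℝ (Uc u) z)) z := by
    rw [eum_eq_exp]; exact h3
  have hkey : ((ContinuousLinearMap.smulRight (1 : ℂ →L[ℂ] ℂ)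
        (Complex.exp (-(Uc u z)))).restrictScalars ℝ).comp (-fderiv ℝ (Uc u) z)
      = -(eum u z) • fderiv ℝ (Uc u) z := by
    refine ContinuousLinearMap.ext fun x => ?_
    simp [eum, Uc, Complex.ofReal_exp, Complex.ofReal_neg, smul_eq_mul]
    ring
  exact hkey ▸ h4

lemma pdd_eum (u : C3 → ℝ) (hu : ContDiff ℝ 2 u) (v w : C3) (z : C3) :
    pdd v w (eum u) z = -(eum u z) * pdd v w (Uc u) z := by
  simp only [pdd, (hasFDerivAt_eum u hu z).fderiv]
  simp
  ring

/- first derivatives of f as C¹ functions -/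
lemma pdd_eq_comp (v w : C3) (f : C3 → ℂ) :
    pdd v w f = fun z => pddF v w (fderiv ℝ f z) :=
  funext fun z => pdd_eq_pddF v w f z

lemma contDiff_pdd (v w : C3) (f : C3 → ℂ) (hf : ContDiff ℝ 2 f) :
    ContDiff ℝ 1 (pdd v w f) := by
  rw [pdd_eq_comp]
  exact (pddF v w).contDiff.comp (hf.fderiv_right (by norm_num))

lemma fderiv_pdd_apply (v w : C3) (f : C3 → ℂ) (hf : ContDiff ℝ 2 f) (z x : C3) :
    fderiv ℝ (pdd v w f) z x
      = (1/2) * (fderiv ℝ (fderiv ℝ f) z x v - Complex.I * fderiv ℝ (fderiv ℝ f) z x w) := by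
  have hdiff : DifferentiableAt ℝ (fderiv ℝ f) z :=
    ((hf.fderiv_right (m := 1) (le_refl _)).differentiable one_ne_zero) z
  rw [pdd_eq_comp]
  have h := ((pddF v w).hasFDerivAt.comp z hdiff.hasFDerivAt).fderiv
  rw [show (fun z => pddF v w (fderiv ℝ f z)) = ⇑(pddF v w) ∘ fderiv ℝ f from rfl, h]
  simp [pddF_apply]

/- commutation of mixed Wirtinger derivatives -/
lemma pdd_comm (f : C3 → ℂ) (hf : ContDiff ℝ 2 f) (a a' b b' : C3) (z : C3) :
    pdd a a' (pdd b b' f) z = pdd b b' (pdd a a' f) z := by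
  have hs : ∀ v w, fderiv ℝ (fderiv ℝ f) z v w = fderiv ℝ (fderiv ℝ f) z w v :=
    hf.contDiffAt.isSymmSndFDerivAt (by norm_num)
  have e1 : pdd a a' (pdd b b' f) z
      = (1/2) * (fderiv ℝ (pdd b b' f) z a - Complex.I * fderiv ℝ (pdd b b' f) z a') := rfl
  have e2 : pdd b b' (pdd a a' f) z
      = (1/2) * (fderiv ℝ (pdd a a' f) z b - Complex.I * fderiv ℝ (pdd a a' f) z b') := rfl
  rw [e1, e2, fderiv_pdd_apply b b' f hf z a, fderiv_pdd_apply b b' f hf z a',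
    fderiv_pdd_apply a a' f hf z b, fderiv_pdd_apply a a' f hf z b']
  linear_combination ((1:ℂ)/4) * hs a b - (Complex.I/4) * hs a b'
    - (Complex.I/4) * hs a' b + (Complex.I^2/4) * hs a' b'


noncomputable def A1 (u : C3 → ℝ) : C3 → ℂ := pdd ee1 ff1 (Uc u)
noncomputable def A2 (u : C3 → ℝ) : C3 → ℂ := pdd ee2 ff2 (Uc u)

lemma hinv_u (u : C3 → ℝ)
    (hbase : ∀ z w : C3, z.1 = w.1 → z.2.1 = w.2.1 → u z = u w) :
    ∀ x, u (Lm x) = u x := fun x => hbase (Lm x) x rfl rfl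

lemma hinv_Uc (u : C3 → ℝ)
    (hbase : ∀ z w : C3, z.1 = w.1 → z.2.1 = w.2.1 → u z = u w) :
    ∀ x, Uc u (Lm x) = Uc u x := fun x => by
  simp only [Uc, hinv_u u hbase x]

lemma hinv_eum (u : C3 → ℝ)
    (hbase : ∀ z w : C3, z.1 = w.1 → z.2.1 = w.2.1 → u z = u w) :
    ∀ x, eum u (Lm x) = eum u x := fun x => by
  simp only [eum, hinv_u u hbase x]

lemma diff_Uc (u : C3 → ℝ) (hu : ContDiff ℝ 2 u) :
    Differentiable ℝ (Uc u) := (contDiff_Uc u hu).differentiable two_ne_zero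

lemma diff_eum (u : C3 → ℝ) (hu : ContDiff ℝ 2 u) :
    Differentiable ℝ (eum u) := (contDiff_eum u hu).differentiable two_ne_zero

lemma diff_A1 (u : C3 → ℝ) (hu : ContDiff ℝ 2 u) : Differentiable ℝ (A1 u) :=
  (contDiff_pdd ee1 ff1 _ (contDiff_Uc u hu)).differentiable one_ne_zero

lemma diff_A2 (u : C3 → ℝ) (hu : ContDiff ℝ 2 u) : Differentiable ℝ (A2 u) :=
  (contDiff_pdd ee2 ff2 _ (contDiff_Uc u hu)).differentiable one_ne_zero

lemma hinv_A1 (u : C3 → ℝ) (hu : ContDiff ℝ 2 u)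
    (hbase : ∀ z w : C3, z.1 = w.1 → z.2.1 = w.2.1 → u z = u w) : ∀ x, A1 u (Lm x) = A1 u x := fun x =>
  pdd_invariant (Uc u) (diff_Uc u hu) (hinv_Uc u hbase) ee1 ff1 rfl rfl x

lemma pd3_Uc_zero (u : C3 → ℝ) (hu : ContDiff ℝ 2 u)
    (hbase : ∀ z w : C3, z.1 = w.1 → z.2.1 = w.2.1 → u z = u w) : ∀ x, pd3 (fun w : C3 => (u w : ℂ)) x = 0 := fun x => by
  rw [pd3_pdd]
  exact pdd3_invariant (Uc u) (diff_Uc u hu) (hinv_Uc u hbase) x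

lemma hexp2 (u : C3 → ℝ) : ∀ x, Complex.exp ((u x : ℂ)) * eum u x = 1 := fun x => by
  simp [eum, Complex.ofReal_exp, ← Complex.exp_add]

lemma dOm010 (u : C3 → ℝ) (hu : ContDiff ℝ 2 u)
    (hbase : ∀ z w : C3, z.1 = w.1 → z.2.1 = w.2.1 → u z = u w) : delOmegaU u 0 1 0 = fun w => (-2*Complex.I) * (eum u w * A2 u w) := by
  funext w
  simp only [delOmegaU, delU, VactU, dz1V, dz2V, dz3V, w3V,
    Matrix.cons_val_zero, Matrix.cons_val_one, Matrix.head_cons]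
  rw [pd3_Uc_zero u hu hbase w, pd2_pdd, pd1_pdd,
    show pdd ee2 ff2 (fun w : C3 => ((u w : ℝ) : ℂ)) w = A2 u w from rfl,
    show pdd ee1 ff1 (fun w : C3 => ((u w : ℝ) : ℂ)) w = A1 u w from rfl]
  norm_num
  linear_combination (2*Complex.I * eum u w * A2 u w) * hexp2 u w

lemma pdd_fst11 (z : C3) : pdd ee1 ff1 (fun x : C3 => x.1) z = 1 := by
  rw [pdd_fst]
  simp [ee1, ff1, Complex.I_mul_I]
  norm_num

lemma pdd_fst22 (z : C3) : pdd ee2 ff2 (fun x : C3 => x.1) z = 0 := by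
  rw [pdd_fst]
  simp [ee2, ff2]

lemma dOm011 (u : C3 → ℝ) (hu : ContDiff ℝ 2 u)
    (hbase : ∀ z w : C3, z.1 = w.1 → z.2.1 = w.2.1 → u z = u w) : delOmegaU u 0 1 1 = fun w => (2*Complex.I) * (eum u w * A1 u w) := by
  funext w
  simp only [delOmegaU, delU, VactU, dz1V, dz2V, dz3V, w3V,
    Matrix.cons_val_zero, Matrix.cons_val_one, Matrix.head_cons]
  rw [pd3_Uc_zero u hu hbase w, pd2_pdd, pd1_pdd,
    show pdd ee2 ff2 (fun w : C3 => ((u w : ℝ) : ℂ)) w = A2 u w from rfl,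
    show pdd ee1 ff1 (fun w : C3 => ((u w : ℝ) : ℂ)) w = A1 u w from rfl]
  norm_num
  linear_combination (2*Complex.I * eum u w * A1 u w) * hexp2 u w

lemma dOm_k2 (u : C3 → ℝ) (i j : Fin 3) : delOmegaU u i j 2 = fun _ => 0 := by
  funext w
  simp only [delOmegaU, show ((2:Fin 3) = 0) = False from by decide,
    show ((2:Fin 3) = 1) = False from by decide, if_false]
  ring

lemma dOm020 (u : C3 → ℝ) (hu : ContDiff ℝ 2 u)
    (hbase : ∀ z w : C3, z.1 = w.1 → z.2.1 = w.2.1 → u z = u w) : delOmegaU u 0 2 0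
    = fun w => (-2*Complex.I) * (w.1 * (eum u w * A2 u w)) := by
  funext w
  simp only [delOmegaU, delU, VactU, dz1V, dz2V, dz3V, w3V,
    Matrix.cons_val_zero, Matrix.cons_val_one, Matrix.head_cons,
    Matrix.cons_val_two, Matrix.tail_cons]
  rw [pd3_Uc_zero u hu hbase w, pd2_pdd, pd1_pdd,
    show pdd ee2 ff2 (fun w : C3 => ((u w : ℝ) : ℂ)) w = A2 u w from rfl,
    show pdd ee1 ff1 (fun w : C3 => ((u w : ℝ) : ℂ)) w = A1 u w from rfl]
  norm_num
  linear_combination (2*Complex.I * w.1 * eum u w * A2 u w) * hexp2 u w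

lemma dOm021 (u : C3 → ℝ) (hu : ContDiff ℝ 2 u)
    (hbase : ∀ z w : C3, z.1 = w.1 → z.2.1 = w.2.1 → u z = u w) : delOmegaU u 0 2 1
    = fun w => (2*Complex.I) * (w.1 * (eum u w * A1 u w) - eum u w) := by
  funext w
  simp only [delOmegaU, delU, VactU, dz1V, dz2V, dz3V, w3V,
    Matrix.cons_val_zero, Matrix.cons_val_one, Matrix.head_cons,
    Matrix.cons_val_two, Matrix.tail_cons]
  rw [pd3_Uc_zero u hu hbase w, pd2_pdd, pd1_pdd,
    show pdd ee2 ff2 (fun w : C3 => ((u w : ℝ) : ℂ)) w = A2 u w from rfl,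
    show pdd ee1 ff1 (fun w : C3 => ((u w : ℝ) : ℂ)) w = A1 u w from rfl]
  norm_num
  linear_combination (2*Complex.I * w.1 * eum u w * A1 u w) * hexp2 u w
    + (2*Complex.I * eum u w * eum u w) * (Complex.mul_conj w.1)

lemma dOm120 (u : C3 → ℝ) : delOmegaU u 1 2 0 = fun _ => 0 := by
  funext w
  simp only [delOmegaU, delU, VactU, dz1V, dz2V, dz3V, w3V,
    Matrix.cons_val_zero, Matrix.cons_val_one, Matrix.head_cons,
    Matrix.cons_val_two, Matrix.tail_cons]
  norm_num

lemma dOm121 (u : C3 → ℝ) (hu : ContDiff ℝ 2 u)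
    (hbase : ∀ z w : C3, z.1 = w.1 → z.2.1 = w.2.1 → u z = u w) : delOmegaU u 1 2 1 = fun _ => 0 := by
  funext w
  simp only [delOmegaU, delU, VactU, dz1V, dz2V, dz3V, w3V,
    Matrix.cons_val_zero, Matrix.cons_val_one, Matrix.head_cons,
    Matrix.cons_val_two, Matrix.tail_cons]
  rw [pd3_Uc_zero u hu hbase w]
  norm_num
  ring

lemma VactU_zero_fun (u : C3 → ℝ) (k : Fin 3) (z : C3) :
    VactU u k (fun _ => (0:ℂ)) z = 0 := by
  fin_cases k <;> simp [VactU, pd1, pd2, pd3, fderiv_const]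

lemma VactU_neg (u : C3 → ℝ) (k : Fin 3) (g : C3 → ℂ) (z : C3) :
    VactU u k (fun w => -g w) z = -VactU u k g z := by
  fin_cases k <;>
    simp only [VactU, pd1_pdd, pd2_pdd, pd3_pdd, pdd_neg] <;> ring

lemma sigma_swap (u : C3 → ℝ) (i j : Fin 3) (z : C3) :
    sigmaU u j i z = -sigmaU u i j z := by
  have h : ∀ k, delOmegaU u j i k = fun w => -delOmegaU u i j k w := by
    intro k; funext w; simp only [delOmegaU]; ring
  simp only [sigmaU, Fin.sum_univ_three]
  rw [h 0, h 1, h 2, VactU_neg, VactU_neg, VactU_neg]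
  ring

lemma sigma01 (u : C3 → ℝ) (hu : ContDiff ℝ 2 u)
    (hbase : ∀ z w : C3, z.1 = w.1 → z.2.1 = w.2.1 → u z = u w) (z : C3) : sigmaU u 0 1 z = 0 := by
  have hEd := diff_eum u hu
  have hA1d := diff_A1 u hu
  have hA2d := diff_A2 u hu
  have h2d : DifferentiableAt ℝ (fun w => eum u w * A2 u w) z := (hEd z).mul (hA2d z)
  have h1d : DifferentiableAt ℝ (fun w => eum u w * A1 u w) z := (hEd z).mul (hA1d z)
  have h3 : pdd ee3 ff3 (fun w => (2*Complex.I) * (eum u w * A1 u w)) z = 0 := by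
    refine pdd3_invariant _ ((hEd.mul hA1d).const_mul _) (fun x => ?_) z
    simp only [Pi.mul_apply, hinv_eum u hbase x, hinv_A1 u hu hbase x]
  simp only [sigmaU, Fin.sum_univ_three, dOm010 u hu hbase, dOm011 u hu hbase,
    dOm_k2 u 0 1, VactU, pd1_pdd, pd2_pdd, pd3_pdd, pdd_zero_fun]
  rw [h3, pdd_const_mul ee1 ff1 (-2*Complex.I) (fun w => eum u w * A2 u w) z h2d,
    pdd_const_mul ee2 ff2 (2*Complex.I) (fun w => eum u w * A1 u w) z h1d,
    pdd_mul ee1 ff1 (eum u) (A2 u) z (hEd z) (hA2d z),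
    pdd_mul ee2 ff2 (eum u) (A1 u) z (hEd z) (hA1d z),
    pdd_eum u hu ee1 ff1 z, pdd_eum u hu ee2 ff2 z,
    show pdd ee1 ff1 (Uc u) z = A1 u z from rfl,
    show pdd ee2 ff2 (Uc u) z = A2 u z from rfl,
    show pdd ee1 ff1 (A2 u) z = pdd ee1 ff1 (pdd ee2 ff2 (Uc u)) z from rfl,
    pdd_comm (Uc u) (contDiff_Uc u hu) ee1 ff1 ee2 ff2 z,
    show pdd ee2 ff2 (pdd ee1 ff1 (Uc u)) z = pdd ee2 ff2 (A1 u) z from rfl]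
  ring

lemma sigma02 (u : C3 → ℝ) (hu : ContDiff ℝ 2 u)
    (hbase : ∀ z w : C3, z.1 = w.1 → z.2.1 = w.2.1 → u z = u w) (z : C3) : sigmaU u 0 2 z = 0 := by
  have hEd := diff_eum u hu
  have hA1d := diff_A1 u hu
  have hA2d := diff_A2 u hu
  have hz1 : Differentiable ℝ (fun w : C3 => w.1) := differentiable_fst
  have h2d : DifferentiableAt ℝ (fun w : C3 => w.1 * (eum u w * A2 u w)) z :=
    (hz1 z).mul ((hEd z).mul (hA2d z))
  have h1d : DifferentiableAt ℝ (fun w : C3 => w.1 * (eum u w * A1 u w)) z :=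
    (hz1 z).mul ((hEd z).mul (hA1d z))
  have hsubd : DifferentiableAt ℝ (fun w : C3 => w.1 * (eum u w * A1 u w) - eum u w) z :=
    h1d.sub (hEd z)
  have h3 : pdd ee3 ff3
      (fun w => (2*Complex.I) * (w.1 * (eum u w * A1 u w) - eum u w)) z = 0 := by
    refine pdd3_invariant _ (((hz1.mul (hEd.mul hA1d)).sub hEd).const_mul _) (fun x => ?_) z
    simp only [Pi.mul_apply, Pi.sub_apply, hinv_eum u hbase x, hinv_A1 u hu hbase x,
      show (Lm x).1 = x.1 from rfl]
  simp only [sigmaU, Fin.sum_univ_three, dOm020 u hu hbase, dOm021 u hu hbase,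
    dOm_k2 u 0 2, VactU, pd1_pdd, pd2_pdd, pd3_pdd, pdd_zero_fun]
  rw [h3,
    pdd_const_mul ee1 ff1 (-2*Complex.I) (fun w : C3 => w.1 * (eum u w * A2 u w)) z h2d,
    pdd_const_mul ee2 ff2 (2*Complex.I)
      (fun w : C3 => w.1 * (eum u w * A1 u w) - eum u w) z hsubd,
    pdd_sub ee2 ff2 (fun w : C3 => w.1 * (eum u w * A1 u w)) (eum u) z h1d (hEd z),
    pdd_mul ee1 ff1 (fun w : C3 => w.1) (fun w => eum u w * A2 u w) z (hz1 z)
      ((hEd z).mul (hA2d z)),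
    pdd_mul ee2 ff2 (fun w : C3 => w.1) (fun w => eum u w * A1 u w) z (hz1 z)
      ((hEd z).mul (hA1d z)),
    pdd_mul ee1 ff1 (eum u) (A2 u) z (hEd z) (hA2d z),
    pdd_mul ee2 ff2 (eum u) (A1 u) z (hEd z) (hA1d z),
    pdd_eum u hu ee1 ff1 z, pdd_eum u hu ee2 ff2 z,
    pdd_fst11 z, pdd_fst22 z,
    show pdd ee1 ff1 (Uc u) z = A1 u z from rfl,
    show pdd ee2 ff2 (Uc u) z = A2 u z from rfl,
    show pdd ee1 ff1 (A2 u) z = pdd ee1 ff1 (pdd ee2 ff2 (Uc u)) z from rfl,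
    pdd_comm (Uc u) (contDiff_Uc u hu) ee1 ff1 ee2 ff2 z,
    show pdd ee2 ff2 (pdd ee1 ff1 (Uc u)) z = pdd ee2 ff2 (A1 u) z from rfl]
  ring

lemma sigma12 (u : C3 → ℝ) (hu : ContDiff ℝ 2 u)
    (hbase : ∀ z w : C3, z.1 = w.1 → z.2.1 = w.2.1 → u z = u w) (z : C3) : sigmaU u 1 2 z = 0 := by
  simp only [sigmaU, Fin.sum_univ_three, dOm120 u, dOm121 u hu hbase,
    dOm_k2 u 1 2, VactU_zero_fun]
  simp

theorem torus_fibration_torsion_bivector_vanishes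
    (u : C3 → ℝ) (hu : ContDiff ℝ (⊤ : ℕ∞) u)
    -- u is pulled back from the base torus: it does not depend on z₃
    (hbase : ∀ z w : C3, z.1 = w.1 → z.2.1 = w.2.1 → u z = u w) :
    ∀ (i j : Fin 3) (z : C3), sigmaU u i j z = 0 := by
  have h2 : ContDiff ℝ 2 u := hu.of_le (WithTop.coe_le_coe.mpr (le_top : (2:ℕ∞) ≤ ⊤))
  intro i j z
  fin_cases i <;> fin_cases j
  · have h := sigma_swap u 0 0 z
    show sigmaU u 0 0 z = 0
    linear_combination ((1:ℂ)/2) * h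
  · exact sigma01 u h2 hbase z
  · exact sigma02 u h2 hbase z
  · show sigmaU u 1 0 z = 0
    rw [sigma_swap u 0 1 z, sigma01 u h2 hbase z]
    simp
  · have h := sigma_swap u 1 1 z
    show sigmaU u 1 1 z = 0
    linear_combination ((1:ℂ)/2) * h
  · exact sigma12 u h2 hbase z
  · show sigmaU u 2 0 z = 0
    rw [sigma_swap u 0 2 z, sigma02 u h2 hbase z]
    simp
  · show sigmaU u 2 1 z = 0
    rw [sigma_swap u 1 2 z, sigma12 u h2 hbase z]
    simp
  · have h := sigma_swap u 2 2 z
    show sigmaU u 2 2 z = 0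
    linear_combination ((1:ℂ)/2) * h
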